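/- Let p be an odd prime and S ⊆ ℤ/p a subset closed under (a, b) ↦ 2b - a containing at least two distinct elements. Then S = ℤ/p. -/
import Mathlib


theorem stmt6 (p : ℕ) (hp : p.Prime) (hodd : Odd p) (S : Set (ZMod p))
    (hclosed : ∀ a ∈ S, ∀ b ∈ S, 2 * b - a ∈ S)
    (htwo : ∃ a ∈ S, ∃ b ∈ S, a ≠ b) :
    S = Set.univ := by
  haveI : Fact p.Prime := ⟨hp⟩
  obtain ⟨a, ha, b, hb, hab⟩ := htwo
  set d := b - a with hd
  have hd0 : d ≠ 0 := sub_ne_zero.mpr (Ne.symm hab)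
  have key : ∀ n : ℕ, a + (n : ZMod p) * d ∈ S := by
    intro n
    induction n using Nat.twoStepInduction with
    | zero => simpa using ha
    | one => simpa [hd] using hb
    | more n ih1 ih2 =>
      have h := hclosed _ ih1 _ ih2
      have : 2 * (a + ((n + 1 : ℕ) : ZMod p) * d) - (a + (n : ZMod p) * d)
          = a + ((n + 2 : ℕ) : ZMod p) * d := by push_cast; ring
      rwa [this] at h
  ext x
  simp only [Set.mem_univ, iff_true]
  have h := key ((x - a) * d⁻¹).val
  rwa [ZMod.natCast_val, ZMod.cast_id, mul_assoc, inv_mul_cancel₀ hd0, mul_one,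
    add_sub_cancel] at h
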